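/- arXiv:1002.0058 — 10 statements merged into one kernel-verified Lean document; each statement's English description precedes it below -/
import Mathlib

section
/- Let X be a real normed space and let x ∈ X with ‖x‖ = 1. Then every y ∈ X with ‖y‖ = 1 satisfies exactly one of the following three conditions: (i) ‖t•y + x‖ < ‖t•y − x‖ for all real t > 0; (ii) ‖t•y − x‖ < ‖t•y + x‖ for all real t > 0; (iii) there exists a real t > 0 with ‖t•y + x‖ = ‖t•y − x‖. -/
open Set

section Trichotomy

variable {X α : Type*} [TopologicalSpace X] [LinearOrder α] [TopologicalSpace α]
  [OrderClosedTopology α] {s : Set X} {f g : X → α}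

theorem IsPreconnected.forall_lt_or_forall_gt_or_exists_eq (hs : IsPreconnected s)
    (hf : ContinuousOn f s) (hg : ContinuousOn g s) :
    (∀ x ∈ s, f x < g x) ∨ (∀ x ∈ s, g x < f x) ∨ ∃ x ∈ s, f x = g x := by
  by_contra! h
  obtain ⟨⟨a, ha, hga⟩, ⟨b, hb, hfb⟩, hne⟩ := h
  obtain ⟨c, hc, hfgc⟩ := hs.intermediate_value₂ hb ha hf hg hfb hga
  exact hne c hc hfgc

theorem IsPreconnected.exactly_one_forall_lt_forall_gt_exists_eq (hs : IsPreconnected s)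
    (hs' : s.Nonempty) (hf : ContinuousOn f s) (hg : ContinuousOn g s) :
    ((∀ x ∈ s, f x < g x) ∧ ¬ (∀ x ∈ s, g x < f x) ∧ ¬ ∃ x ∈ s, f x = g x) ∨
    (¬ (∀ x ∈ s, f x < g x) ∧ (∀ x ∈ s, g x < f x) ∧ ¬ ∃ x ∈ s, f x = g x) ∨
    (¬ (∀ x ∈ s, f x < g x) ∧ ¬ (∀ x ∈ s, g x < f x) ∧ ∃ x ∈ s, f x = g x) := by
  obtain ⟨a, ha⟩ := hs'
  rcases hs.forall_lt_or_forall_gt_or_exists_eq hf hg with hlt | hgt | ⟨c, hc, heq⟩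
  · refine .inl ⟨hlt, fun hgt ↦ (hlt a ha).asymm (hgt a ha), fun ⟨c, hc, heq⟩ ↦ ?_⟩
    exact (hlt c hc).ne heq
  · refine .inr (.inl ⟨fun hlt ↦ (hlt a ha).asymm (hgt a ha), hgt, fun ⟨c, hc, heq⟩ ↦ ?_⟩)
    exact (hgt c hc).ne' heq
  · exact .inr (.inr ⟨fun hlt ↦ (hlt c hc).ne heq, fun hgt ↦ (hgt c hc).ne' heq, c, hc, heq⟩)

end Trichotomy

theorem bisector_trichotomy_general {X : Type*} [NormedAddCommGroup X] [NormedSpace ℝ X]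
    (x : X) (y : X) :
    ((∀ t : ℝ, 0 < t → ‖t • y + x‖ < ‖t • y - x‖) ∧
      ¬ (∀ t : ℝ, 0 < t → ‖t • y - x‖ < ‖t • y + x‖) ∧
      ¬ (∃ t : ℝ, 0 < t ∧ ‖t • y + x‖ = ‖t • y - x‖)) ∨
    (¬ (∀ t : ℝ, 0 < t → ‖t • y + x‖ < ‖t • y - x‖) ∧
      (∀ t : ℝ, 0 < t → ‖t • y - x‖ < ‖t • y + x‖) ∧
      ¬ (∃ t : ℝ, 0 < t ∧ ‖t • y + x‖ = ‖t • y - x‖)) ∨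
    (¬ (∀ t : ℝ, 0 < t → ‖t • y + x‖ < ‖t • y - x‖) ∧
      ¬ (∀ t : ℝ, 0 < t → ‖t • y - x‖ < ‖t • y + x‖) ∧
      (∃ t : ℝ, 0 < t ∧ ‖t • y + x‖ = ‖t • y - x‖)) :=
  isPreconnected_Ioi.exactly_one_forall_lt_forall_gt_exists_eq nonempty_Ioi
    (by fun_prop) (by fun_prop)

/-- Every unit vector `y` satisfies exactly one of:
(i) `‖t•y + x‖ < ‖t•y − x‖` for all `t > 0`;
(ii) `‖t•y − x‖ < ‖t•y + x‖` for all `t > 0`;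
(iii) `‖t•y + x‖ = ‖t•y − x‖` for some `t > 0`. -/
theorem bisector_trichotomy {X : Type*} [NormedAddCommGroup X] [NormedSpace ℝ X]
    (x : X) (hx : ‖x‖ = 1) (y : X) (hy : ‖y‖ = 1) :
    ((∀ t : ℝ, 0 < t → ‖t • y + x‖ < ‖t • y - x‖) ∧
      ¬ (∀ t : ℝ, 0 < t → ‖t • y - x‖ < ‖t • y + x‖) ∧
      ¬ (∃ t : ℝ, 0 < t ∧ ‖t • y + x‖ = ‖t • y - x‖)) ∨
    (¬ (∀ t : ℝ, 0 < t → ‖t • y + x‖ < ‖t • y - x‖) ∧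
      (∀ t : ℝ, 0 < t → ‖t • y - x‖ < ‖t • y + x‖) ∧
      ¬ (∃ t : ℝ, 0 < t ∧ ‖t • y + x‖ = ‖t • y - x‖)) ∨
    (¬ (∀ t : ℝ, 0 < t → ‖t • y + x‖ < ‖t • y - x‖) ∧
      ¬ (∀ t : ℝ, 0 < t → ‖t • y - x‖ < ‖t • y + x‖) ∧
      (∃ t : ℝ, 0 < t ∧ ‖t • y + x‖ = ‖t • y - x‖)) :=
  bisector_trichotomy_general x y
end

section
/- Let X be a real normed space and let x, y ∈ X satisfy ‖y − x‖ < ‖y + x‖. Then for every real t with 0 ≤ t < 1, the point w := (1 − t)•y + t•x satisfies ‖w − x‖ < ‖w + x‖ (equivalently, (1 − t)•‖y − x‖ < ‖(1 − t)•y + (1 + t)•x‖). -/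
theorem one_sub_mul_norm_lt_norm_sub_smul {E : Type*} [SeminormedAddCommGroup E]
    [NormedSpace ℝ E] {a b : E} (hab : ‖a‖ < ‖b‖) {t : ℝ} (ht : 0 ≤ t) :
    (1 - t) * ‖a‖ < ‖b - t • a‖ :=
  calc (1 - t) * ‖a‖ < ‖b‖ - ‖t • a‖ := by
        rw [norm_smul, Real.norm_of_nonneg ht]; linarith
    _ ≤ ‖b - t • a‖ := norm_sub_norm_le b (t • a)

/-- If `‖y − x‖ < ‖y + x‖`, then for all `0 ≤ t < 1` the point
`w := (1 − t)•y + t•x` satisfies `‖w − x‖ < ‖w + x‖`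
(equivalently, `(1 − t)•‖y − x‖ < ‖(1 − t)•y + (1 + t)•x‖`). -/
theorem arc_stays_on_side {X : Type*} [NormedAddCommGroup X] [NormedSpace ℝ X]
    (x y : X) (h : ‖y - x‖ < ‖y + x‖) (t : ℝ) (ht0 : 0 ≤ t) (ht1 : t < 1) :
    ‖((1 - t) • y + t • x) - x‖ < ‖((1 - t) • y + t • x) + x‖ ∧
      (1 - t) * ‖y - x‖ < ‖(1 - t) • y + (1 + t) • x‖ := by
  have key := one_sub_mul_norm_lt_norm_sub_smul h ht0
  have hsub : ((1 - t) • y + t • x) - x = (1 - t) • (y - x) := by module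
  have hadd : ((1 - t) • y + t • x) + x = (y + x) - t • (y - x) := by module
  have hadd' : (1 - t) • y + (1 + t) • x = (y + x) - t • (y - x) := by module
  refine ⟨?_, hadd' ▸ key⟩
  rwa [hsub, hadd, norm_smul, Real.norm_of_nonneg (sub_nonneg.2 ht1.le)]
end

section
/- Let X be a real normed space and let x ∈ X with ‖x‖ = 1. Then the set P(x)^r := {y ∈ X : ‖y‖ = 1 and ‖t•y − x‖ < ‖t•y + x‖ for all real t > 0} contains x and is path-connected in the subspace topology of the unit sphere S; by symmetry (reflection in the origin) the same holds for P(x)^l := {y ∈ X : ‖y‖ = 1 and ‖t•y + x‖ < ‖t•y − x‖ for all real t > 0}, which contains −x. -/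
/-!
A vector lies in `sideCone x` when its whole open ray lies strictly on the side of `x` of the
bisector `B(-x, x)`, so `sideCone x` is a cone. By the triangle inequality, moving a point on the
side of `x` further in the direction of `x` keeps it there, so the cone is star-convex about `x`.
It avoids `0`, so radial projection onto the sphere is continuous on it and maps it onto its trace
on the sphere, which is therefore path-connected.
-/

open Metric Set

section

variable {X : Type*} [SeminormedAddCommGroup X] [NormedSpace ℝ X]

/-- `P(x)^r = sphere 0 1 ∩ sideCone x` and `P(x)^l = sphere 0 1 ∩ sideCone (-x)`. -/
def sideCone (x : X) : Set X :=
  {v | ∀ t : ℝ, 0 < t → ‖t • v - x‖ < ‖t • v + x‖}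

theorem norm_add_smul_sub_lt_norm_add_smul_add {v x : X} (h : ‖v - x‖ < ‖v + x‖) {b : ℝ}
    (hb : 0 ≤ b) : ‖v + b • x - x‖ < ‖v + b • x + x‖ := by
  have hb2 : (0 : ℝ) < b + 2 := by linarith
  -- `v + x` and `v + b • x - x` are the two convex combinations of `v - x` and `v + b • x + x`
  -- with weights `b/(b+2), 2/(b+2)` and `2/(b+2), b/(b+2)`.
  have h₁ : (b + 2) * ‖v + x‖ ≤ b * ‖v - x‖ + 2 * ‖v + b • x + x‖ := by
    have e : (b + 2) • (v + x) = b • (v - x) + (2 : ℝ) • (v + b • x + x) := by module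
    simpa only [← e, norm_smul_of_nonneg hb2.le, norm_smul_of_nonneg hb,
      norm_smul_of_nonneg zero_le_two] using norm_add_le (b • (v - x)) ((2 : ℝ) • (v + b • x + x))
  have h₂ : (b + 2) * ‖v + b • x - x‖ ≤ 2 * ‖v - x‖ + b * ‖v + b • x + x‖ := by
    have e : (b + 2) • (v + b • x - x) = (2 : ℝ) • (v - x) + b • (v + b • x + x) := by module
    simpa only [← e, norm_smul_of_nonneg hb2.le, norm_smul_of_nonneg hb,
      norm_smul_of_nonneg zero_le_two] using norm_add_le ((2 : ℝ) • (v - x)) (b • (v + b • x + x))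
  have hsum : ‖v + x‖ + ‖v + b • x - x‖ ≤ ‖v - x‖ + ‖v + b • x + x‖ :=
    le_of_mul_le_mul_left (by linarith) hb2
  linarith

namespace sideCone

variable {x v : X}

theorem smul_mem (hv : v ∈ sideCone x) {c : ℝ} (hc : 0 < c) : c • v ∈ sideCone x := by
  intro t ht
  simpa only [smul_smul] using hv (t * c) (mul_pos ht hc)

theorem add_smul_mem (hv : v ∈ sideCone x) {b : ℝ} (hb : 0 ≤ b) : v + b • x ∈ sideCone x := by
  intro t ht
  have e : t • (v + b • x) = t • v + (t * b) • x := by module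
  rw [e]
  exact norm_add_smul_sub_lt_norm_add_smul_add (hv t ht) (mul_nonneg ht.le hb)

theorem self_mem (hx : ‖x‖ ≠ 0) : x ∈ sideCone x := by
  intro t ht
  have e₁ : t • x - x = (t - 1) • x := by module
  have e₂ : t • x + x = (t + 1) • x := by module
  rw [e₁, e₂, norm_smul, norm_smul, Real.norm_eq_abs, Real.norm_eq_abs,
    mul_lt_mul_iff_left₀ (lt_of_le_of_ne (norm_nonneg x) (Ne.symm hx)), abs_lt]
  constructor <;> linarith [le_abs_self (t + 1)]

theorem norm_ne_zero (hv : v ∈ sideCone x) : ‖v‖ ≠ 0 := by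
  intro h0
  have h := hv 1 one_pos
  rw [one_smul] at h
  have h₁ := norm_add_le v x
  have h₂ : ‖x‖ ≤ ‖v‖ + ‖v - x‖ := by simpa only [sub_sub_cancel] using norm_sub_le v (v - x)
  linarith

theorem starConvex (hx : ‖x‖ ≠ 0) : StarConvex ℝ x (sideCone x) := by
  intro y hy a b ha hb hab
  rcases hb.eq_or_lt with rfl | hb
  · rw [add_zero] at hab
    rw [hab, one_smul, zero_smul, add_zero]
    exact self_mem hx
  · have e : a • x + b • y = b • (y + (a / b) • x) := by
      rw [smul_add, smul_smul, mul_div_cancel₀ a hb.ne']; abel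
    rw [e]
    exact smul_mem (add_smul_mem hy (div_nonneg ha hb.le)) hb

theorem isPathConnected_sphere_inter (hx : ‖x‖ ≠ 0) :
    IsPathConnected (sphere 0 1 ∩ sideCone x) := by
  have hproj : (fun v : X => ‖v‖⁻¹ • v) '' sideCone x = sphere 0 1 ∩ sideCone x := by
    ext y
    constructor
    · rintro ⟨v, hv, rfl⟩
      have hv₀ := norm_ne_zero hv
      refine ⟨?_, smul_mem hv (inv_pos.2 (lt_of_le_of_ne (norm_nonneg v) hv₀.symm))⟩
      rw [mem_sphere_zero_iff_norm, norm_smul, norm_inv, norm_norm, inv_mul_cancel₀ hv₀]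
    · rintro ⟨hy₁, hy⟩
      refine ⟨y, hy, ?_⟩
      simp only [mem_sphere_zero_iff_norm.1 hy₁, inv_one, one_smul]
  have hcont : ContinuousOn (fun v : X => ‖v‖⁻¹ • v) (sideCone x) :=
    (continuousOn_id.norm.inv₀ fun _ hv => norm_ne_zero hv).smul continuousOn_id
  exact hproj ▸ ((starConvex hx).isPathConnected (self_mem hx)).image' hcont

end sideCone

end

/-- The set `P(x)^r` of unit vectors `y` with `‖t•y − x‖ < ‖t•y + x‖`
for all `t > 0` contains `x` and is path-connected (in the subspace topology of the
unit sphere, equivalently as a subset of `X`); by symmetry the same holds for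
`P(x)^l`, which contains `−x`. -/
theorem radial_sides_pathConnected {X : Type*} [NormedAddCommGroup X] [NormedSpace ℝ X]
    (x : X) (hx : ‖x‖ = 1) :
    x ∈ {y : X | ‖y‖ = 1 ∧ ∀ t : ℝ, 0 < t → ‖t • y - x‖ < ‖t • y + x‖} ∧
    IsPathConnected {y : X | ‖y‖ = 1 ∧ ∀ t : ℝ, 0 < t → ‖t • y - x‖ < ‖t • y + x‖} ∧
    (-x) ∈ {y : X | ‖y‖ = 1 ∧ ∀ t : ℝ, 0 < t → ‖t • y + x‖ < ‖t • y - x‖} ∧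
    IsPathConnected {y : X | ‖y‖ = 1 ∧ ∀ t : ℝ, 0 < t → ‖t • y + x‖ < ‖t • y - x‖} := by
  have hsphere (z : X) : {y : X | ‖y‖ = 1 ∧ ∀ t : ℝ, 0 < t → ‖t • y - z‖ < ‖t • y + z‖} =
      sphere 0 1 ∩ sideCone z := by
    ext y
    rw [mem_inter_iff, mem_sphere_zero_iff_norm]
    rfl
  have hleft : {y : X | ‖y‖ = 1 ∧ ∀ t : ℝ, 0 < t → ‖t • y + x‖ < ‖t • y - x‖} =
      {y : X | ‖y‖ = 1 ∧ ∀ t : ℝ, 0 < t → ‖t • y - -x‖ < ‖t • y + -x‖} := by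
    simp only [sub_neg_eq_add, ← sub_eq_add_neg]
  have hx₀ : ‖x‖ ≠ 0 := by rw [hx]; exact one_ne_zero
  have hnx₀ : ‖-x‖ ≠ 0 := by rwa [norm_neg]
  rw [hleft, hsphere, hsphere]
  exact ⟨⟨by simpa using hx, sideCone.self_mem hx₀⟩, sideCone.isPathConnected_sphere_inter hx₀,
    ⟨by simpa using hx, sideCone.self_mem hnx₀⟩, sideCone.isPathConnected_sphere_inter hnx₀⟩
end

section
/- Let X be a finite-dimensional real normed space and let x ∈ X with ‖x‖ = 1. Write Q(x) for the closure, in the subspace topology of the unit sphere S, of the classical radial projection P(x) := {y ∈ S : ∃ t > 0, ‖t•y − x‖ = ‖t•y + x‖}. Set L := {y ∈ S : ∀ t > 0, ‖t•y + x‖ < ‖t•y − x‖} \ Q(x) and R := {y ∈ S : ∀ t > 0, ‖t•y − x‖ < ‖t•y + x‖} \ Q(x). Then S is the union of the pairwise disjoint sets Q(x), L, and R; Q(x) is compact; L ∪ R is open in S; and R = −L (R is the image of L under reflection in the origin). -/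
/-!
Off the closure `Q(x)` the two functions `t ↦ ‖t • y - x‖` and `t ↦ ‖t • y + x‖` never agree on
`(0, ∞)`, so by the intermediate value theorem one of them stays strictly below the other; this
splits `S \ Q(x)` into `L` and `R`. The set `Q(x)` is closed in the compact sphere, hence compact,
and its complement in `S` is exactly `L ∪ R`. Finally `y ↦ -y` swaps the two norms, so it preserves
`Q(x)` and exchanges `L` and `R`.
-/

/-- The classical radial projection of the bisector `B(−x,x)`, as a subset of the
unit sphere (viewed as a subtype of `X`). -/
def radialProjSub {X : Type*} [NormedAddCommGroup X] [NormedSpace ℝ X] (x : X) :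
    Set {z : X // ‖z‖ = 1} :=
  {y | ∃ t : ℝ, 0 < t ∧ ‖t • (y : X) - x‖ = ‖t • (y : X) + x‖}

/-- `Q(x)`: the closure of the radial projection in the subspace topology of the unit
sphere, regarded again as a subset of `X`. -/
def radialProjClosure {X : Type*} [NormedAddCommGroup X] [NormedSpace ℝ X] (x : X) :
    Set X :=
  Subtype.val '' closure (radialProjSub x)

-- The sets `R` and `L` of the theorem are `nearSide x \ Q(x)` and `farSide x \ Q(x)`.
def nearSide {X : Type*} [NormedAddCommGroup X] [NormedSpace ℝ X] (x : X) : Set X :=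
  {y | ‖y‖ = 1 ∧ ∀ t : ℝ, 0 < t → ‖t • y - x‖ < ‖t • y + x‖}

def farSide {X : Type*} [NormedAddCommGroup X] [NormedSpace ℝ X] (x : X) : Set X :=
  {y | ‖y‖ = 1 ∧ ∀ t : ℝ, 0 < t → ‖t • y + x‖ < ‖t • y - x‖}

theorem IsPreconnected.forall_lt_or_forall_gt_of_ne {X α : Type*} [TopologicalSpace X]
    [LinearOrder α] [TopologicalSpace α] [OrderClosedTopology α] {s : Set X}
    (hs : IsPreconnected s) {f g : X → α} (hf : ContinuousOn f s) (hg : ContinuousOn g s)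
    (hne : ∀ a ∈ s, f a ≠ g a) : (∀ a ∈ s, f a < g a) ∨ (∀ a ∈ s, g a < f a) := by
  by_contra! h
  obtain ⟨⟨a, ha, hga⟩, ⟨b, hb, hfb⟩⟩ := h
  obtain ⟨c, hc, hfg⟩ := hs.intermediate_value₂ hb ha hf hg hfb hga
  exact hne c hc hfg

section RadialProjection

variable {X : Type*} [NormedAddCommGroup X] [NormedSpace ℝ X] {x y : X}

theorem norm_smul_neg_sub (t : ℝ) (x y : X) : ‖t • -y - x‖ = ‖t • y + x‖ := by
  rw [smul_neg, ← neg_add', norm_neg]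

theorem norm_smul_neg_add (t : ℝ) (x y : X) : ‖t • -y + x‖ = ‖t • y - x‖ := by
  rw [smul_neg, ← norm_neg, neg_add, neg_neg, ← sub_eq_add_neg]

theorem neg_mem_nearSide_iff : -y ∈ nearSide x ↔ y ∈ farSide x := by
  simp only [nearSide, farSide, Set.mem_ofPred_eq, norm_neg, norm_smul_neg_sub,
    norm_smul_neg_add]

theorem neg_mem_farSide_iff : -y ∈ farSide x ↔ y ∈ nearSide x := by
  rw [← neg_mem_nearSide_iff, neg_neg]

theorem disjoint_farSide_nearSide (x : X) : Disjoint (farSide x) (nearSide x) :=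
  Set.disjoint_left.2 fun _ hfar hnear =>
    (hfar.2 1 one_pos).not_gt (hnear.2 1 one_pos)

theorem mem_farSide_or_mem_nearSide (hy : ‖y‖ = 1)
    (hne : ∀ t : ℝ, 0 < t → ‖t • y + x‖ ≠ ‖t • y - x‖) : y ∈ farSide x ∨ y ∈ nearSide x := by
  have hcont : ∀ c : X, ContinuousOn (fun t : ℝ => ‖t • y + c‖) (Set.Ioi 0) := fun c => by
    fun_prop
  have hsub : ContinuousOn (fun t : ℝ => ‖t • y - x‖) (Set.Ioi 0) := by
    simpa only [sub_eq_add_neg] using hcont (-x)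
  exact (isPreconnected_Ioi.forall_lt_or_forall_gt_of_ne (hcont x) hsub hne).imp
    (fun h => ⟨hy, h⟩) (fun h => ⟨hy, h⟩)

theorem radialProjClosure_subset_sphere (x : X) : radialProjClosure x ⊆ {z : X | ‖z‖ = 1} := by
  rintro _ ⟨z, -, rfl⟩
  exact z.2

theorem mem_radialProjClosure_of_norm_eq (hy : ‖y‖ = 1) {t : ℝ} (ht : 0 < t)
    (h : ‖t • y - x‖ = ‖t • y + x‖) : y ∈ radialProjClosure x :=
  ⟨⟨y, hy⟩, subset_closure ⟨t, ht, h⟩, rfl⟩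

theorem neg_mem_radialProjClosure (hy : y ∈ radialProjClosure x) :
    -y ∈ radialProjClosure x := by
  obtain ⟨z, hz, rfl⟩ := hy
  let negS : {z : X // ‖z‖ = 1} → {z : X // ‖z‖ = 1} := fun w => ⟨-w, by rw [norm_neg, w.2]⟩
  have hmaps : Set.MapsTo negS (radialProjSub x) (radialProjSub x) := by
    rintro w ⟨t, ht, heq⟩
    exact ⟨t, ht, by rw [norm_smul_neg_sub, norm_smul_neg_add, heq]⟩
  exact ⟨negS z, hmaps.closure (by fun_prop) hz, rfl⟩

theorem neg_mem_radialProjClosure_iff : -y ∈ radialProjClosure x ↔ y ∈ radialProjClosure x :=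
  ⟨fun h => neg_neg y ▸ neg_mem_radialProjClosure h, neg_mem_radialProjClosure⟩

theorem isCompact_radialProjClosure [FiniteDimensional ℝ X] (x : X) :
    IsCompact (radialProjClosure x) := by
  have hS : IsClosed {z : X | ‖z‖ = 1} := isClosed_eq continuous_norm continuous_const
  have hclosed : IsClosed (radialProjClosure x) :=
    hS.isClosedEmbedding_subtypeVal.isClosedMap _ isClosed_closure
  refine (isCompact_sphere (0 : X) 1).of_isClosed_subset hclosed fun y hy => ?_
  exact mem_sphere_zero_iff_norm.2 (radialProjClosure_subset_sphere x hy)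

theorem sphere_eq_radialProjClosure_union (x : X) :
    {z : X | ‖z‖ = 1} =
      radialProjClosure x ∪ farSide x \ radialProjClosure x ∪ nearSide x \ radialProjClosure x := by
  ext y
  constructor
  · intro hy
    by_cases hQ : y ∈ radialProjClosure x
    · exact Or.inl (Or.inl hQ)
    · have hne : ∀ t : ℝ, 0 < t → ‖t • y + x‖ ≠ ‖t • y - x‖ := fun t ht h =>
        hQ (mem_radialProjClosure_of_norm_eq hy ht h.symm)
      rcases mem_farSide_or_mem_nearSide hy hne with hfar | hnear
      · exact Or.inl (Or.inr ⟨hfar, hQ⟩)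
      · exact Or.inr ⟨hnear, hQ⟩
  · rintro ((hQ | ⟨⟨hy, -⟩, -⟩) | ⟨⟨hy, -⟩, -⟩)
    exacts [radialProjClosure_subset_sphere x hQ, hy, hy]

theorem preimage_sides_diff_radialProjClosure (x : X) :
    (Subtype.val ⁻¹' (farSide x \ radialProjClosure x ∪ nearSide x \ radialProjClosure x) :
      Set {z : X // ‖z‖ = 1}) = (closure (radialProjSub x))ᶜ := by
  ext z
  have hQ : (z : X) ∈ radialProjClosure x ↔ z ∈ closure (radialProjSub x) :=
    Subtype.val_injective.mem_set_image
  have hS := (sphere_eq_radialProjClosure_union x).le z.2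
  simp only [Set.mem_preimage, Set.mem_union, Set.mem_sdiff, Set.mem_compl_iff, ← hQ] at hS ⊢
  tauto

end RadialProjection

theorem sphere_decomposition_general {X : Type*} [NormedAddCommGroup X] [NormedSpace ℝ X]
    [FiniteDimensional ℝ X] (x : X)
    (L R : Set X)
    (hL : L = {y : X | ‖y‖ = 1 ∧ ∀ t : ℝ, 0 < t → ‖t • y + x‖ < ‖t • y - x‖} \
      radialProjClosure x)
    (hR : R = {y : X | ‖y‖ = 1 ∧ ∀ t : ℝ, 0 < t → ‖t • y - x‖ < ‖t • y + x‖} \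
      radialProjClosure x) :
    {z : X | ‖z‖ = 1} = radialProjClosure x ∪ L ∪ R ∧
    Disjoint (radialProjClosure x) L ∧ Disjoint (radialProjClosure x) R ∧
    Disjoint L R ∧
    IsCompact (radialProjClosure x) ∧
    IsOpen ((Subtype.val ⁻¹' (L ∪ R)) : Set {z : X // ‖z‖ = 1}) ∧
    R = (fun y : X => -y) '' L := by
  change L = farSide x \ radialProjClosure x at hL
  change R = nearSide x \ radialProjClosure x at hR
  subst hL hR
  refine ⟨sphere_eq_radialProjClosure_union x, Set.disjoint_sdiff_right, Set.disjoint_sdiff_right,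
    (disjoint_farSide_nearSide x).mono Set.sdiff_subset Set.sdiff_subset,
    isCompact_radialProjClosure x, ?_, ?_⟩
  · rw [preimage_sides_diff_radialProjClosure]
    exact isClosed_closure.isOpen_compl
  · ext y
    rw [Set.image_neg_eq_neg, Set.mem_neg, Set.mem_sdiff, Set.mem_sdiff, neg_mem_farSide_iff,
      neg_mem_radialProjClosure_iff]

/-- With `Q(x)` the closure in the sphere `S` of the radial projection,
`L` and `R` the strict-side sets with `Q(x)` removed, the sphere is the union of the
pairwise disjoint sets `Q(x)`, `L`, `R`; `Q(x)` is compact; `L ∪ R` is open in `S`;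
and `R` is the reflection of `L` in the origin. -/
theorem sphere_decomposition {X : Type*} [NormedAddCommGroup X] [NormedSpace ℝ X]
    [FiniteDimensional ℝ X] (x : X) (hx : ‖x‖ = 1)
    (L R : Set X)
    (hL : L = {y : X | ‖y‖ = 1 ∧ ∀ t : ℝ, 0 < t → ‖t • y + x‖ < ‖t • y - x‖} \
      radialProjClosure x)
    (hR : R = {y : X | ‖y‖ = 1 ∧ ∀ t : ℝ, 0 < t → ‖t • y - x‖ < ‖t • y + x‖} \
      radialProjClosure x) :
    {z : X | ‖z‖ = 1} = radialProjClosure x ∪ L ∪ R ∧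
    Disjoint (radialProjClosure x) L ∧ Disjoint (radialProjClosure x) R ∧
    Disjoint L R ∧
    IsCompact (radialProjClosure x) ∧
    IsOpen ((Subtype.val ⁻¹' (L ∪ R)) : Set {z : X // ‖z‖ = 1}) ∧
    R = (fun y : X => -y) '' L :=
  sphere_decomposition_general x L R hL hR
end

section
/- Let X be a real normed space, let x ∈ X with ‖x‖ = 1, and let z ∈ X satisfy ‖z − x‖ = ‖z + x‖. Put t := ‖z − x‖. Then t ≥ 1 and t ≥ ‖z‖; the points u := (1/t)•(z − x) and v := (1/t)•(z + x) lie on the unit sphere S; v − u = (2/t)•x is a positive multiple of x; and (1/t)•z = (u + v)/2. In particular ‖(1/t)•z‖ ≤ 1 and (1/t)•z is the midpoint of a chord of the unit ball parallel to x, i.e. (1/t)•z ∈ {(u + v)/2 : u, v ∈ S, v − u ∈ ℝ_{>0}•x}. -/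
/-- The set of midpoints of chords of the unit ball parallel to `x`. -/
def chordMidpoints {X : Type*} [NormedAddCommGroup X] [NormedSpace ℝ X] (x : X) :
    Set X :=
  {m | ∃ u v : X, ‖u‖ = 1 ∧ ‖v‖ = 1 ∧ (∃ l : ℝ, 0 < l ∧ v - u = l • x) ∧
    m = (1 / 2 : ℝ) • (u + v)}

/-! Both `x` and `z` are half the sum or difference of `z + x` and `z - x`, so the triangle
inequality bounds their norms by the common value `t` of `‖z - x‖` and `‖z + x‖`. Dividing by
`t` sends `z ± x` to unit vectors whose midpoint is `t⁻¹ • z` and whose difference is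
`(2 / t) • x`. -/

section

variable {X : Type*} [SeminormedAddCommGroup X] [NormedSpace ℝ X]

theorem norm_le_half_norm_sub_add_norm_add (z x : X) : ‖z‖ ≤ (‖z - x‖ + ‖z + x‖) / 2 := by
  have h := norm_add_le (z - x) (z + x)
  rw [show (z - x) + (z + x) = (2 : ℝ) • z by module, norm_smul, Real.norm_two] at h
  linarith

theorem norm_le_of_norm_sub_eq_norm_add {z x : X} (h : ‖z - x‖ = ‖z + x‖) : ‖z‖ ≤ ‖z - x‖ := by
  linarith [norm_le_half_norm_sub_add_norm_add z x]

theorem norm_le_norm_sub_of_norm_sub_eq_norm_add {z x : X} (h : ‖z - x‖ = ‖z + x‖) :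
    ‖x‖ ≤ ‖z - x‖ := by
  have hx := norm_le_half_norm_sub_add_norm_add x z
  rw [norm_sub_rev, add_comm x z] at hx
  linarith

end

/-- For a bisector point `z` (so `‖z − x‖ = ‖z + x‖`), with
`t := ‖z − x‖`, `u := (1/t)•(z − x)` and `v := (1/t)•(z + x)`: we have `t ≥ 1`,
`t ≥ ‖z‖`, `u` and `v` lie on the unit sphere, `v − u = (2/t)•x` is a positive
multiple of `x`, `(1/t)•z` is the midpoint `(u + v)/2`, `‖(1/t)•z‖ ≤ 1`, and
`(1/t)•z` is a midpoint of a chord of the unit ball parallel to `x`. -/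
theorem bisector_point_to_chord_midpoint {X : Type*} [NormedAddCommGroup X]
    [NormedSpace ℝ X] (x : X) (hx : ‖x‖ = 1) (z : X) (hz : ‖z - x‖ = ‖z + x‖)
    (t : ℝ) (ht : t = ‖z - x‖)
    (u v : X) (hu : u = (1 / t) • (z - x)) (hv : v = (1 / t) • (z + x)) :
    1 ≤ t ∧ ‖z‖ ≤ t ∧ ‖u‖ = 1 ∧ ‖v‖ = 1 ∧
    v - u = (2 / t) • x ∧ 0 < 2 / t ∧
    (1 / t) • z = (1 / 2 : ℝ) • (u + v) ∧
    ‖(1 / t) • z‖ ≤ 1 ∧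
    (1 / t) • z ∈ chordMidpoints x := by
  have ht1 : 1 ≤ t := ht ▸ hx ▸ norm_le_norm_sub_of_norm_sub_eq_norm_add hz
  have htpos : 0 < t := by linarith
  have hzt : ‖z‖ ≤ t := ht ▸ norm_le_of_norm_sub_eq_norm_add hz
  have hnu : ‖u‖ = 1 := by
    rw [hu, ht, one_div]
    exact norm_smul_inv_norm (norm_pos_iff.mp (ht ▸ htpos))
  have hnv : ‖v‖ = 1 := by
    rw [hv, ht, hz, one_div]
    exact norm_smul_inv_norm (norm_pos_iff.mp (hz ▸ ht ▸ htpos))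
  have hvu : v - u = (2 / t) • x := by rw [hu, hv]; module
  have hmid : (1 / t) • z = (1 / 2 : ℝ) • (u + v) := by rw [hu, hv]; module
  have hl : 0 < 2 / t := by positivity
  refine ⟨ht1, hzt, hnu, hnv, hvu, hl, hmid, ?_, u, v, hnu, hnv, ⟨2 / t, hl, hvu⟩, hmid⟩
  rw [norm_smul, one_div, norm_inv, Real.norm_of_nonneg htpos.le]
  exact inv_mul_le_one_of_le₀ hzt htpos.le
end

section
/- Let X be a real normed space, let x ∈ X with ‖x‖ = 1, let λ > 0 be real, and let u, v ∈ X satisfy ‖u‖ = ‖v‖ = 1 and v = u + λ•x. Then the point z := (1/λ)•(u + v) lies in the bisector B(−x,x), with ‖z − x‖ = ‖z + x‖ = 2/λ, and (1/‖z − x‖)•z = (u + v)/2. Hence every midpoint of a chord of the unit ball parallel to x is the image under the bounded-representation map Φ of a point of the bisector. -/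
/-! The identities `z - x = (2/λ) • u` and `z + x = (2/λ) • v` reduce everything to
`‖u‖ = ‖v‖ = 1`. -/

section ChordAlgebra

variable {K E : Type*} [Field K] [AddCommGroup E] [Module K E]

theorem one_div_smul_add_add_smul_sub {lam : K} (hlam : lam ≠ 0) (u x : E) :
    (1 / lam) • (u + (u + lam • x)) - x = (2 / lam) • u := by
  match_scalars <;> field_simp <;> ring

theorem one_div_smul_add_add_smul_add {lam : K} (hlam : lam ≠ 0) (u x : E) :
    (1 / lam) • (u + (u + lam • x)) + x = (2 / lam) • (u + lam • x) := by
  match_scalars <;> field_simp <;> ring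

end ChordAlgebra

theorem chord_midpoint_is_Phi_image_general {X : Type*} [NormedAddCommGroup X]
    [NormedSpace ℝ X] (x : X) (lam : ℝ) (hlam : 0 < lam)
    (u v : X) (hu : ‖u‖ = 1) (hv : ‖v‖ = 1) (huv : v = u + lam • x)
    (z : X) (hz : z = (1 / lam) • (u + v)) :
    ‖z - x‖ = ‖z + x‖ ∧ ‖z - x‖ = 2 / lam ∧
    (1 / ‖z - x‖) • z = (1 / 2 : ℝ) • (u + v) := by
  have hsub : z - x = (2 / lam) • u := by
    rw [hz, huv, one_div_smul_add_add_smul_sub hlam.ne']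
  have hadd : z + x = (2 / lam) • v := by
    rw [hz, huv, one_div_smul_add_add_smul_add hlam.ne']
  have hscale : 0 ≤ 2 / lam := by positivity
  have hnorm_sub : ‖z - x‖ = 2 / lam := by
    rw [hsub, norm_smul_of_nonneg hscale, hu, mul_one]
  have hnorm_add : ‖z + x‖ = 2 / lam := by
    rw [hadd, norm_smul_of_nonneg hscale, hv, mul_one]
  refine ⟨hnorm_sub.trans hnorm_add.symm, hnorm_sub, ?_⟩
  rw [hnorm_sub, hz, smul_smul]
  congr 1
  field_simp

/-- If `u, v` are unit vectors with `v = u + λ•x` (`λ > 0`), then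
`z := (1/λ)•(u + v)` lies on the bisector `B(−x,x)` with
`‖z − x‖ = ‖z + x‖ = 2/λ`, and `(1/‖z − x‖)•z = (u + v)/2`. Hence every midpoint
of a chord of the unit ball parallel to `x` is the image under the
bounded-representation map `Φ` of a bisector point. -/
theorem chord_midpoint_is_Phi_image {X : Type*} [NormedAddCommGroup X]
    [NormedSpace ℝ X] (x : X) (hx : ‖x‖ = 1) (lam : ℝ) (hlam : 0 < lam)
    (u v : X) (hu : ‖u‖ = 1) (hv : ‖v‖ = 1) (huv : v = u + lam • x)
    (z : X) (hz : z = (1 / lam) • (u + v)) :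
    ‖z - x‖ = ‖z + x‖ ∧ ‖z - x‖ = 2 / lam ∧
    (1 / ‖z - x‖) • z = (1 / 2 : ℝ) • (u + v) :=
  chord_midpoint_is_Phi_image_general x lam hlam u v hu hv huv z hz
end

section
/- Let X be a finite-dimensional real normed space of dimension n ≥ 2 and let x ∈ X with ‖x‖ = 1. Then the shadow boundary SB(x) := {z ∈ S : ∀ t ∈ ℝ, ‖z + t•x‖ ≥ 1} equals the set of limit directions of the bisector at infinity: SB(x) = {y ∈ S : there exists a sequence (z_k) in X with ‖z_k − x‖ = ‖z_k + x‖ for all k, ‖z_k‖ → ∞, and (1/‖z_k‖)•z_k → y}. -/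
open Filter Topology

/-!
When `z` lies on the bisector, the convex function `s ↦ ‖z + s • x‖` takes equal values at
`s = ±1`, so it is at least `‖z‖ - ‖x‖` everywhere; rescaling by `‖z‖⁻¹` shows that every limit
direction of the bisector is Birkhoff orthogonal to `x`. Conversely, if `y` is Birkhoff orthogonal
to `x` then so is `n • y`, and the intermediate value theorem finds a bisector point
`n • y + s • x` with `|s| ≤ 1`; these points run off to infinity in the direction of `y`.
-/

section

variable {X : Type*} [NormedAddCommGroup X] [NormedSpace ℝ X]

def IsBirkhoffOrthogonal (y x : X) : Prop := ∀ t : ℝ, ‖y‖ ≤ ‖y + t • x‖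

theorem IsBirkhoffOrthogonal.smul_left {y x : X} (h : IsBirkhoffOrthogonal y x) (c : ℝ) :
    IsBirkhoffOrthogonal (c • y) x := by
  intro t
  rcases eq_or_ne c 0 with rfl | hc
  · simp
  calc ‖c • y‖ = |c| * ‖y‖ := norm_smul c y
    _ ≤ |c| * ‖y + (t / c) • x‖ := by gcongr; exact h _
    _ = ‖c • y + t • x‖ := by
      rw [← Real.norm_eq_abs, ← norm_smul, smul_add, smul_smul, mul_div_cancel₀ _ hc]

theorem IsBirkhoffOrthogonal.exists_norm_sub_eq_norm_add {w x : X}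
    (h : IsBirkhoffOrthogonal w x) :
    ∃ s ∈ Set.Icc (-1 : ℝ) 1, ‖w + s • x - x‖ = ‖w + s • x + x‖ := by
  have hcont : Continuous fun s : ℝ => ‖w + s • x - x‖ - ‖w + s • x + x‖ := by fun_prop
  have hright : ‖w + (1 : ℝ) • x - x‖ - ‖w + (1 : ℝ) • x + x‖ ≤ 0 := by
    rw [show w + (1 : ℝ) • x - x = w by module,
      show w + (1 : ℝ) • x + x = w + (2 : ℝ) • x by module]
    exact sub_nonpos.mpr (h 2)
  have hleft : 0 ≤ ‖w + (-1 : ℝ) • x - x‖ - ‖w + (-1 : ℝ) • x + x‖ := by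
    rw [show w + (-1 : ℝ) • x - x = w + (-2 : ℝ) • x by module,
      show w + (-1 : ℝ) • x + x = w by module]
    exact sub_nonneg.mpr (h (-2))
  obtain ⟨s, hs, hzero⟩ :=
    intermediate_value_Icc' (by norm_num) hcont.continuousOn ⟨hright, hleft⟩
  exact ⟨s, hs, sub_eq_zero.mp hzero⟩

theorem norm_add_le_norm_add_smul_of_norm_sub_eq {z x : X} (h : ‖z - x‖ = ‖z + x‖) {s : ℝ}
    (hs : 1 ≤ s) : ‖z + x‖ ≤ ‖z + s • x‖ := by
  -- `z + x` is a convex combination of `z - x` and `z + s • x`.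
  have hcomb : (s + 1) • (z + x) = (s - 1) • (z - x) + (2 : ℝ) • (z + s • x) := by module
  have := norm_add_le ((s - 1) • (z - x)) ((2 : ℝ) • (z + s • x))
  rw [← hcomb, norm_smul, norm_smul, norm_smul, Real.norm_of_nonneg (by linarith),
    Real.norm_of_nonneg (by linarith), Real.norm_two, h] at this
  linarith

theorem norm_sub_norm_le_norm_add_smul_of_norm_sub_eq {z x : X} (h : ‖z - x‖ = ‖z + x‖) (s : ℝ) :
    ‖z‖ - ‖x‖ ≤ ‖z + s • x‖ := by
  rcases le_or_gt 1 s with hs | hs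
  · exact (norm_sub_le_norm_add z x).trans (norm_add_le_norm_add_smul_of_norm_sub_eq h hs)
  rcases le_or_gt s (-1) with hs' | hs'
  · have h' : ‖z - -x‖ = ‖z + -x‖ := by rw [sub_neg_eq_add, ← sub_eq_add_neg, h]
    calc ‖z‖ - ‖x‖ ≤ ‖z + -x‖ := by rw [← sub_eq_add_neg]; exact norm_sub_norm_le z x
      _ ≤ ‖z + (-s) • -x‖ := norm_add_le_norm_add_smul_of_norm_sub_eq h' (by linarith)
      _ = ‖z + s • x‖ := by rw [neg_smul_neg]
  · have hsx : ‖s • x‖ ≤ ‖x‖ := by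
      rw [norm_smul]
      exact mul_le_of_le_one_left (norm_nonneg x) (abs_le.mpr ⟨hs'.le, hs.le⟩)
    linarith [norm_sub_le_norm_add z (s • x)]

theorem one_le_norm_add_smul_of_tendsto_bisector {ι : Type*} {l : Filter ι} [l.NeBot]
    {z : ι → X} {x y : X} (hz : ∀ k, ‖z k - x‖ = ‖z k + x‖)
    (hnorm : Tendsto (fun k => ‖z k‖) l atTop)
    (hlim : Tendsto (fun k => ‖z k‖⁻¹ • z k) l (𝓝 y)) (t : ℝ) : 1 ≤ ‖y + t • x‖ := by
  have hlower : Tendsto (fun k => 1 - ‖z k‖⁻¹ * ‖x‖) l (𝓝 1) := by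
    simpa using tendsto_const_nhds.sub ((tendsto_inv_atTop_zero.comp hnorm).mul_const ‖x‖)
  refine le_of_tendsto_of_tendsto hlower (hlim.add_const _).norm ?_
  filter_upwards [hnorm.eventually_gt_atTop 0] with k hk
  have hrescale : ‖z k‖⁻¹ • z k + t • x = ‖z k‖⁻¹ • (z k + (t * ‖z k‖) • x) := by
    rw [smul_add, smul_smul, mul_left_comm, inv_mul_cancel₀ hk.ne', mul_one]
  calc 1 - ‖z k‖⁻¹ * ‖x‖ = ‖z k‖⁻¹ * (‖z k‖ - ‖x‖) := by field_simp
    _ ≤ ‖z k‖⁻¹ * ‖z k + (t * ‖z k‖) • x‖ := by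
      gcongr; exact norm_sub_norm_le_norm_add_smul_of_norm_sub_eq (hz k) _
    _ = ‖‖z k‖⁻¹ • z k + t • x‖ := by
      rw [hrescale, norm_smul, norm_inv, norm_norm]

theorem tendsto_inv_norm_smul_of_tendsto_inv_smul {ι : Type*} {l : Filter ι} {u : ι → X}
    {c : ι → ℝ} {y : X} (hy : y ≠ 0) (hc : ∀ᶠ i in l, 0 < c i)
    (h : Tendsto (fun i => (c i)⁻¹ • u i) l (𝓝 y)) :
    Tendsto (fun i => ‖u i‖⁻¹ • u i) l (𝓝 (‖y‖⁻¹ • y)) := by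
  refine ((h.norm.inv₀ (norm_ne_zero_iff.mpr hy)).smul h).congr' ?_
  filter_upwards [hc] with i hi
  rw [norm_smul, Real.norm_of_nonneg (inv_nonneg.mpr hi.le), smul_smul, mul_inv,
    inv_inv, mul_right_comm, mul_inv_cancel₀ hi.ne', one_mul]

theorem IsBirkhoffOrthogonal.exists_seq_bisector {y x : X} (h : IsBirkhoffOrthogonal y x)
    (hy : y ≠ 0) :
    ∃ z : ℕ → X, (∀ k, ‖z k - x‖ = ‖z k + x‖) ∧ Tendsto (fun k => ‖z k‖) atTop atTop ∧
      Tendsto (fun k => ‖z k‖⁻¹ • z k) atTop (𝓝 (‖y‖⁻¹ • y)) := by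
  choose s hs hbis using fun n : ℕ => (h.smul_left n).exists_norm_sub_eq_norm_add
  refine ⟨fun n => (n : ℝ) • y + s n • x, hbis, ?_, ?_⟩
  · refine tendsto_atTop_mono (fun n => ?_)
      (tendsto_natCast_atTop_atTop.atTop_mul_const (norm_pos_iff.mpr hy))
    simpa [norm_smul] using h.smul_left n (s n)
  · have hsmall : Tendsto (fun n : ℕ => (n : ℝ)⁻¹ • (s n • x)) atTop (𝓝 0) := by
      refine (tendsto_inv_atTop_zero.comp tendsto_natCast_atTop_atTop).zero_smul_isBoundedUnder_le
        (isBoundedUnder_of ⟨‖x‖, fun n => ?_⟩)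
      simpa [norm_smul] using mul_le_of_le_one_left (norm_nonneg x) (abs_le.mpr (hs n))
    refine tendsto_inv_norm_smul_of_tendsto_inv_smul hy
      (tendsto_natCast_atTop_atTop.eventually_gt_atTop 0) ?_
    refine (by simpa using tendsto_const_nhds.add hsmall : Tendsto _ _ (𝓝 y)).congr' ?_
    filter_upwards [eventually_ne_atTop 0] with n hn
    rw [smul_add, inv_smul_smul₀ (Nat.cast_ne_zero.mpr hn : (n : ℝ) ≠ 0)]

end

theorem shadowBoundary_eq_limit_directions_general {X : Type*} [NormedAddCommGroup X]
    [NormedSpace ℝ X]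
    (x : X) :
    {z : X | ‖z‖ = 1 ∧ ∀ t : ℝ, 1 ≤ ‖z + t • x‖} =
      {y : X | ‖y‖ = 1 ∧ ∃ z : ℕ → X,
        (∀ k, ‖z k - x‖ = ‖z k + x‖) ∧
        Tendsto (fun k => ‖z k‖) atTop atTop ∧
        Tendsto (fun k => (‖z k‖)⁻¹ • z k) atTop (𝓝 y)} := by
  ext y
  refine and_congr_right fun hy => ⟨fun hB => ?_, ?_⟩
  · have hyB : IsBirkhoffOrthogonal y x := fun t => hy ▸ hB t
    simpa [hy] using hyB.exists_seq_bisector (norm_ne_zero_iff.mp (by simp [hy]))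
  · rintro ⟨z, hz, hnorm, hlim⟩ t
    exact one_le_norm_add_smul_of_tendsto_bisector hz hnorm hlim t

/-- In a finite-dimensional real normed space of dimension `n ≥ 2`,
the shadow boundary `SB(x) = {z ∈ S : ∀ t, ‖z + t•x‖ ≥ 1}` equals the set of limit
directions of the bisector `B(−x,x)` at infinity. -/
theorem shadowBoundary_eq_limit_directions {X : Type*} [NormedAddCommGroup X]
    [NormedSpace ℝ X] [FiniteDimensional ℝ X] (hn : 2 ≤ Module.finrank ℝ X)
    (x : X) (hx : ‖x‖ = 1) :
    {z : X | ‖z‖ = 1 ∧ ∀ t : ℝ, 1 ≤ ‖z + t • x‖} =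
      {y : X | ‖y‖ = 1 ∧ ∃ z : ℕ → X,
        (∀ k, ‖z k - x‖ = ‖z k + x‖) ∧
        Tendsto (fun k => ‖z k‖) atTop atTop ∧
        Tendsto (fun k => (‖z k‖)⁻¹ • z k) atTop (𝓝 y)} :=
  shadowBoundary_eq_limit_directions_general x
end

section
/- Let X be a finite-dimensional real normed space of dimension n ≥ 2 and let x ∈ X with ‖x‖ = 1. Then the shadow boundary SB(x) := {z ∈ S : ∀ t ∈ ℝ, ‖z + t•x‖ ≥ 1} is contained in the closure, taken in the subspace topology of the unit sphere S, of the classical radial projection P(x) := {y ∈ S : ∃ t > 0, ‖t•y − x‖ = ‖t •y + x‖}. -/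
section

open NormedSpace Set

variable {X : Type*} [NormedAddCommGroup X] [NormedSpace ℝ X]

theorem norm_normalize_sub_le_two_mul {z : X} (hz : ‖z‖ = 1) (w : X) :
    ‖normalize w - z‖ ≤ 2 * ‖w - z‖ := by
  have hnormalize : ‖normalize w - w‖ ≤ ‖w - z‖ := by
    calc ‖normalize w - w‖ = ‖(1 - ‖w‖) • normalize w‖ := by
          nth_rewrite 2 [← norm_smul_normalize w]
          rw [sub_smul, one_smul]
      _ ≤ |1 - ‖w‖| := by
          have hle : ‖normalize w‖ ≤ 1 := by
            by_cases hw : w = 0 <;> simp [hw, norm_normalize]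
          rw [norm_smul, Real.norm_eq_abs]
          exact mul_le_of_le_one_right (abs_nonneg _) hle
      _ ≤ ‖w - z‖ := by simpa [hz, abs_sub_comm] using abs_norm_sub_norm_le w z
  calc ‖normalize w - z‖ ≤ ‖normalize w - w‖ + ‖w - z‖ :=
        norm_sub_le_norm_sub_add_norm_sub _ _ _
    _ ≤ 2 * ‖w - z‖ := by linarith

theorem normalize_mem_radialProjSub {x w : X} (hw : w ≠ 0) {u : ℝ} (hu : 0 < u)
    (h : ‖w - u • x‖ = ‖w + u • x‖) : ⟨normalize w, norm_normalize hw⟩ ∈ radialProjSub x := by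
  refine ⟨‖w‖ / u, by positivity, ?_⟩
  have hscale : (‖w‖ / u) • normalize w = u⁻¹ • w := by
    rw [div_eq_inv_mul, mul_smul, norm_smul_normalize]
  have hx : x = u⁻¹ • u • x := (inv_smul_smul₀ hu.ne' x).symm
  rw [hscale, hx, ← smul_sub, ← smul_add, norm_smul, norm_smul, h]

theorem exists_mem_Icc_norm_sub_smul_eq_norm_add_smul {x z : X}
    (hz : ∀ t : ℝ, ‖z‖ ≤ ‖z + t • x‖) {u : ℝ} (hu : 0 ≤ u) :
    ∃ s ∈ Icc (-u) u, ‖z + s • x - u • x‖ = ‖z + s • x + u • x‖ := by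
  have hcont : ContinuousOn (fun s : ℝ ↦ ‖z + s • x - u • x‖ - ‖z + s • x + u • x‖)
      (Icc (-u) u) := by
    fun_prop
  have hright : ‖z + u • x - u • x‖ - ‖z + u • x + u • x‖ ≤ 0 := by
    simpa [add_assoc, ← add_smul] using hz (u + u)
  have hleft : 0 ≤ ‖z + (-u) • x - u • x‖ - ‖z + (-u) • x + u • x‖ := by
    simpa [sub_eq_add_neg, add_assoc, ← add_smul, ← neg_smul] using hz (-u + -u)
  obtain ⟨s, hs, hzero⟩ := intermediate_value_Icc' (by linarith) hcont ⟨hright, hleft⟩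
  exact ⟨s, hs, sub_eq_zero.1 hzero⟩

end

theorem shadowBoundary_subset_radialProjClosure_general {X : Type*} [NormedAddCommGroup X]
    [NormedSpace ℝ X]
    (x : X) (hx : ‖x‖ = 1) :
    {z : X | ‖z‖ = 1 ∧ ∀ t : ℝ, 1 ≤ ‖z + t • x‖} ⊆
      Subtype.val '' closure (radialProjSub x) := by
  rintro z ⟨hz, hshadow⟩
  refine ⟨⟨z, hz⟩, Metric.mem_closure_iff.2 fun ε hε ↦ ?_, rfl⟩
  obtain ⟨s, hs, hbisector⟩ :=
    exists_mem_Icc_norm_sub_smul_eq_norm_add_smul (fun t ↦ hz ▸ hshadow t)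
      (by positivity : 0 ≤ ε / 3)
  have hw : z + s • x ≠ 0 := norm_pos_iff.1 (one_pos.trans_le (hshadow s))
  refine ⟨_, normalize_mem_radialProjSub hw (by positivity) hbisector, ?_⟩
  calc dist _ _ = ‖NormedSpace.normalize (z + s • x) - z‖ := by
        rw [Subtype.dist_eq, dist_comm, dist_eq_norm]
    _ ≤ 2 * ‖z + s • x - z‖ := norm_normalize_sub_le_two_mul hz _
    _ = 2 * |s| := by rw [add_sub_cancel_left, norm_smul, hx, mul_one, Real.norm_eq_abs]
    _ < ε := by linarith [abs_le.2 hs]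

/-- The shadow boundary `SB(x)` is contained in the closure, taken in
the subspace topology of the unit sphere, of the classical radial projection
`P(x)` (higher-dimensional extension of Theorem 2.6 of Martini–Wu). -/
theorem shadowBoundary_subset_radialProjClosure {X : Type*} [NormedAddCommGroup X]
    [NormedSpace ℝ X] [FiniteDimensional ℝ X] (hn : 2 ≤ Module.finrank ℝ X)
    (x : X) (hx : ‖x‖ = 1) :
    {z : X | ‖z‖ = 1 ∧ ∀ t : ℝ, 1 ≤ ‖z + t • x‖} ⊆
      Subtype.val '' closure (radialProjSub x) :=
  shadowBoundary_subset_radialProjClosure_general x hx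
end

section
/- Let X be a finite-dimensional real normed space and let x ∈ X with ‖x‖ = 1. Define S⁺ := {z ∈ S : ∃ ε > 0, ‖z − ε•x‖ < 1}, for z ∈ S⁺ set σ(z) := sup{s ≥ 0 : ‖z − s•x‖ ≤ 1}, and define φ(z) := z − (σ(z)/2)•x. Then φ is a homeomorphism of S⁺ onto the set C := {(u + v)/2 : u, v ∈ S, v − u ∈ ℝ_{>0}•x, ‖(u + v)/2‖ < 1} of midpoints of chords of the unit ball parallel to x that meet the interior of the unit ball. -/
/-- `S⁺`: the set of upper endpoints (in direction `x`) of chords of the unit ball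
meeting the open unit ball. -/
def upperSphere {X : Type*} [NormedAddCommGroup X] [NormedSpace ℝ X] (x : X) :
    Set X :=
  {z | ‖z‖ = 1 ∧ ∃ ε : ℝ, 0 < ε ∧ ‖z - ε • x‖ < 1}

/-- `σ(z) := sup {s ≥ 0 : ‖z − s•x‖ ≤ 1}`. -/
noncomputable def chordLength {X : Type*} [NormedAddCommGroup X] [NormedSpace ℝ X]
    (x z : X) : ℝ :=
  sSup {s : ℝ | 0 ≤ s ∧ ‖z - s • x‖ ≤ 1}

/-!
`chordLength v p` is the time at which the ray `t ↦ p - t • v` (`t ≥ 0`) leaves the closed unit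
ball. The norm is convex along the ray, so after a time `t₀` with `‖p - t₀ • v‖ < 1` the ray
stays in the open ball until the exit time, where its norm is exactly `1`; thus the exit time
is the unique time after `t₀` at which the norm equals `1`, and since the ray crosses the
sphere there from inside to outside, it depends continuously on `p`.

For `z ∈ S⁺` the chord in direction `x` with upper endpoint `z` is `[z - σ(z) • x, z]`, with
midpoint `φ(z)`. Conversely, from the midpoint `m` of a chord of half-length `h` the upper
endpoint is recovered as `m + chordLength (-x) m • x`, because `chordLength (-x) m = h`.
-/

open Filter Topology

section ExitTime

variable {X : Type*} [NormedAddCommGroup X] [NormedSpace ℝ X] {v p : X}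

lemma norm_smul_add_one_sub_smul_lt_one {a b : X} (ha : ‖a‖ < 1) (hb : ‖b‖ ≤ 1) {θ : ℝ}
    (hθ₀ : 0 < θ) (hθ₁ : θ ≤ 1) : ‖θ • a + (1 - θ) • b‖ < 1 := by
  calc ‖θ • a + (1 - θ) • b‖ ≤ θ * ‖a‖ + (1 - θ) * ‖b‖ := by
        refine (norm_add_le _ _).trans_eq ?_
        rw [norm_smul, norm_smul, Real.norm_of_nonneg hθ₀.le,
          Real.norm_of_nonneg (sub_nonneg.2 hθ₁)]
    _ < 1 := by nlinarith

lemma norm_sub_smul_lt_one_of_mem_uIcc {a b t : ℝ} (ha : ‖p - a • v‖ < 1)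
    (hb : ‖p - b • v‖ ≤ 1) (ht : t ∈ Set.uIcc a b) (htb : t ≠ b) : ‖p - t • v‖ < 1 := by
  have hab : a ≠ b := by
    rintro rfl
    exact htb (by simpa using ht)
  set θ := (b - t) / (b - a)
  have hθ : 0 < θ ∧ θ ≤ 1 := by
    rcases Set.mem_uIcc.1 ht with ⟨hat, htb'⟩ | ⟨hbt, hta⟩
    · have hba : 0 < b - a := by grind
      exact ⟨div_pos (by grind) hba, (div_le_one hba).2 (by linarith)⟩
    · have hba : b - a < 0 := by grind
      exact ⟨div_pos_of_neg_of_neg (by grind) hba, (div_le_one_of_neg hba).2 (by linarith)⟩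
  have hcomb : θ * a + (1 - θ) * b = t := by
    simp only [θ]
    field_simp [sub_ne_zero.2 hab.symm]
    ring
  have hpt : p - t • v = θ • (p - a • v) + (1 - θ) • (p - b • v) := by
    rw [← hcomb]
    module
  rw [hpt]
  exact norm_smul_add_one_sub_smul_lt_one ha hb hθ.1 hθ.2

lemma bddAbove_chordLength_set (hv : v ≠ 0) (p : X) :
    BddAbove {t : ℝ | 0 ≤ t ∧ ‖p - t • v‖ ≤ 1} := by
  refine ⟨(‖p‖ + 1) / ‖v‖, fun t ⟨ht₀, ht⟩ => (le_div_iff₀ (norm_pos_iff.2 hv)).2 ?_⟩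
  calc t * ‖v‖ = ‖p - (p - t • v)‖ := by
        rw [sub_sub_cancel, norm_smul, Real.norm_of_nonneg ht₀]
    _ ≤ ‖p‖ + ‖p - t • v‖ := norm_sub_le _ _
    _ ≤ ‖p‖ + 1 := by linarith

lemma le_chordLength (hv : v ≠ 0) {t : ℝ} (ht₀ : 0 ≤ t) (ht : ‖p - t • v‖ ≤ 1) :
    t ≤ chordLength v p :=
  le_csSup (bddAbove_chordLength_set hv p) ⟨ht₀, ht⟩

lemma chordLength_nonneg_and_norm_le (hv : v ≠ 0) {t₀ : ℝ} (ht₀ : 0 ≤ t₀)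
    (hp : ‖p - t₀ • v‖ ≤ 1) : 0 ≤ chordLength v p ∧ ‖p - chordLength v p • v‖ ≤ 1 := by
  have hclosed : IsClosed {t : ℝ | 0 ≤ t ∧ ‖p - t • v‖ ≤ 1} :=
    (isClosed_le continuous_const continuous_id).inter
      (isClosed_le (by fun_prop : Continuous fun t : ℝ => ‖p - t • v‖) continuous_const)
  exact hclosed.csSup_mem ⟨t₀, ht₀, hp⟩ (bddAbove_chordLength_set hv p)

lemma norm_sub_chordLength_smul (hv : v ≠ 0) {t₀ : ℝ} (ht₀ : 0 ≤ t₀)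
    (hp : ‖p - t₀ • v‖ ≤ 1) : ‖p - chordLength v p • v‖ = 1 := by
  set σ := chordLength v p
  obtain ⟨hσ₀, hσ⟩ := chordLength_nonneg_and_norm_le hv ht₀ hp
  refine hσ.antisymm (not_lt.1 fun hlt => ?_)
  have hnear : ∀ᶠ t in 𝓝[>] σ, ‖p - t • v‖ < 1 :=
    nhdsWithin_le_nhds <|
      (by fun_prop : Continuous fun t : ℝ => ‖p - t • v‖).continuousAt.eventually_lt
        continuousAt_const hlt
  obtain ⟨t, ht, hσt⟩ := (hnear.and self_mem_nhdsWithin).exists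
  exact (le_chordLength hv (hσ₀.trans (Set.mem_Ioi.1 hσt).le) ht.le).not_gt hσt

lemma lt_chordLength (hv : v ≠ 0) {t₀ : ℝ} (ht₀ : 0 ≤ t₀) (hp : ‖p - t₀ • v‖ < 1) :
    t₀ < chordLength v p := by
  refine (le_chordLength hv ht₀ hp.le).lt_of_ne ?_
  rintro rfl
  exact hp.ne (norm_sub_chordLength_smul hv ht₀ hp.le)

lemma norm_sub_smul_lt_one_of_lt_chordLength (hv : v ≠ 0) {t₀ t : ℝ} (ht₀ : 0 ≤ t₀)
    (hp : ‖p - t₀ • v‖ < 1) (ht₀t : t₀ ≤ t) (ht : t < chordLength v p) : ‖p - t • v‖ < 1 :=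
  norm_sub_smul_lt_one_of_mem_uIcc hp (chordLength_nonneg_and_norm_le hv ht₀ hp.le).2
    (Set.mem_uIcc.2 (Or.inl ⟨ht₀t, ht.le⟩)) ht.ne

lemma chordLength_eq_of_norm_eq_one (hv : v ≠ 0) {t₀ a : ℝ} (ht₀ : 0 ≤ t₀)
    (hp : ‖p - t₀ • v‖ < 1) (ht₀a : t₀ ≤ a) (ha : ‖p - a • v‖ = 1) : chordLength v p = a := by
  refine ((le_chordLength hv (ht₀.trans ht₀a) ha.le).lt_or_eq.resolve_left fun hlt => ?_).symm
  exact (norm_sub_smul_lt_one_of_lt_chordLength hv ht₀ hp ht₀a hlt).ne ha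

lemma continuousAt_chordLength (hv : v ≠ 0) {t₀ : ℝ} (ht₀ : 0 ≤ t₀)
    (hp : ‖p - t₀ • v‖ < 1) : ContinuousAt (chordLength v) p := by
  have hcont : ∀ t : ℝ, ContinuousAt (fun q : X => ‖q - t • v‖) p := fun t => by fun_prop
  have hσ := lt_chordLength hv ht₀ hp
  refine tendsto_order.2 ⟨fun b hb => ?_, fun b hb => ?_⟩
  · obtain ⟨t, hbt, htσ⟩ := exists_between (max_lt hb hσ)
    obtain ⟨hbt, ht₀t⟩ := max_lt_iff.1 hbt
    have hpt := norm_sub_smul_lt_one_of_lt_chordLength hv ht₀ hp ht₀t.le htσ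
    filter_upwards [(hcont t).eventually_lt continuousAt_const hpt] with q hq
    exact hbt.trans_le (le_chordLength hv (ht₀.trans ht₀t.le) hq.le)
  · obtain ⟨c, hσc, hcb⟩ := exists_between hb
    have ht₀c : t₀ ≤ c := hσ.le.trans hσc.le
    have hpc : 1 < ‖p - c • v‖ :=
      not_le.1 fun h => (le_chordLength hv (ht₀.trans ht₀c) h).not_gt hσc
    filter_upwards [(hcont t₀).eventually_lt continuousAt_const hp,
      continuousAt_const.eventually_lt (hcont c) hpc] with q hq₀ hqc
    refine lt_of_le_of_lt (not_lt.1 fun hcq => ?_) hcb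
    exact (norm_sub_smul_lt_one_of_lt_chordLength hv ht₀ hq₀ ht₀c hcq).not_gt hqc

end ExitTime

section Chords

variable {X : Type*} [NormedAddCommGroup X] [NormedSpace ℝ X] {x : X}

lemma mem_chordMidpoints_iff {m : X} :
    m ∈ chordMidpoints x ↔ ∃ h : ℝ, 0 < h ∧ ‖m - h • x‖ = 1 ∧ ‖m + h • x‖ = 1 := by
  constructor
  · rintro ⟨u, v, hu, hv, ⟨l, hl, hvu⟩, rfl⟩
    have hv' : v = u + l • x := by rw [← hvu]; abel
    subst hv'
    refine ⟨l / 2, by positivity, ?_, ?_⟩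
    · convert hu using 2; module
    · convert hv using 2; module
  · rintro ⟨h, hh, hu, hv⟩
    exact ⟨m - h • x, m + h • x, hu, hv, ⟨2 * h, by positivity, by module⟩, by module⟩

lemma chord_of_mem_upperSphere (hx : x ≠ 0) {z : X} (hz : z ∈ upperSphere x) :
    0 < chordLength x z ∧ ‖z - chordLength x z • x‖ = 1 ∧
      ‖z - (chordLength x z / 2) • x‖ < 1 := by
  obtain ⟨hz₁, ε, hε, hεz⟩ := hz
  have hσ := lt_chordLength hx hε.le hεz
  refine ⟨hε.trans hσ, norm_sub_chordLength_smul hx hε.le hεz.le, ?_⟩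
  rcases le_or_gt ε (chordLength x z / 2) with hεσ | hσε
  · exact norm_sub_smul_lt_one_of_lt_chordLength hx hε.le hεz hεσ (by linarith)
  · exact norm_sub_smul_lt_one_of_mem_uIcc (b := 0) hεz (by simp [hz₁])
      (Set.mem_uIcc.2 (Or.inr ⟨by linarith, hσε.le⟩)) (by linarith)

lemma chordLength_of_chord (hx : x ≠ 0) {m : X} {h : ℝ} (hh : 0 < h)
    (hu : ‖m - h • x‖ = 1) (hv : ‖m + h • x‖ = 1) (hm : ‖m‖ < 1) :
    chordLength (-x) m = h ∧ m + h • x ∈ upperSphere x ∧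
      chordLength x (m + h • x) = 2 * h := by
  have hvm : m + h • x - h • x = m := add_sub_cancel_right m _
  refine ⟨chordLength_eq_of_norm_eq_one (neg_ne_zero.2 hx) le_rfl (by simpa using hm) hh.le
    (by simpa using hv), ⟨hv, h, hh, by rwa [hvm]⟩, ?_⟩
  refine chordLength_eq_of_norm_eq_one hx hh.le (by rwa [hvm]) (by linarith) ?_
  convert hu using 2
  module

lemma sub_half_chordLength_smul_mem (hx : x ≠ 0) {z : X} (hz : z ∈ upperSphere x) :
    z - (chordLength x z / 2) • x ∈ {m : X | m ∈ chordMidpoints x ∧ ‖m‖ < 1} ∧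
      chordLength (-x) (z - (chordLength x z / 2) • x) = chordLength x z / 2 := by
  obtain ⟨hσ, hσ₁, hσ₂⟩ := chord_of_mem_upperSphere hx hz
  have hu : ‖z - (chordLength x z / 2) • x - (chordLength x z / 2) • x‖ = 1 := by
    rw [sub_sub, ← add_smul, add_halves, hσ₁]
  have hv : ‖z - (chordLength x z / 2) • x + (chordLength x z / 2) • x‖ = 1 := by
    rw [sub_add_cancel, hz.1]
  exact ⟨⟨mem_chordMidpoints_iff.2 ⟨_, half_pos hσ, hu, hv⟩, hσ₂⟩,
    (chordLength_of_chord hx (half_pos hσ) hu hv hσ₂).1⟩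

lemma add_chordLength_neg_smul_mem (hx : x ≠ 0) {m : X} (hm : m ∈ chordMidpoints x)
    (hm₁ : ‖m‖ < 1) : m + chordLength (-x) m • x ∈ upperSphere x ∧
      chordLength x (m + chordLength (-x) m • x) = 2 * chordLength (-x) m := by
  obtain ⟨h, hh, hu, hv⟩ := mem_chordMidpoints_iff.1 hm
  obtain ⟨hτ, hmem, hσ⟩ := chordLength_of_chord hx hh hu hv hm₁
  rw [hτ]
  exact ⟨hmem, hσ⟩

lemma continuousOn_chordLength_upperSphere (hx : x ≠ 0) :
    ContinuousOn (chordLength x) (upperSphere x) :=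
  fun _ ⟨_, _, hε, hεz⟩ => (continuousAt_chordLength hx hε.le hεz).continuousWithinAt

end Chords

theorem upperSphere_homeo_chordMidpoints_general {X : Type*} [NormedAddCommGroup X]
    [NormedSpace ℝ X] (x : X) (hx : ‖x‖ = 1) :
    ∃ e : upperSphere x ≃ₜ {m : X | m ∈ chordMidpoints x ∧ ‖m‖ < 1},
      ∀ z : upperSphere x, (e z : X) = (z : X) - (chordLength x (z : X) / 2) • x := by
  have hx₀ : x ≠ 0 := norm_ne_zero_iff.1 (hx ▸ one_ne_zero)
  have hτ : ContinuousOn (chordLength (-x)) {m : X | m ∈ chordMidpoints x ∧ ‖m‖ < 1} :=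
    fun _ hm => (continuousAt_chordLength (neg_ne_zero.2 hx₀) le_rfl
      (by simpa using hm.2)).continuousWithinAt
  refine ⟨{ toFun := fun z => ⟨_, (sub_half_chordLength_smul_mem hx₀ z.2).1⟩
            invFun := fun m => ⟨_, (add_chordLength_neg_smul_mem hx₀ m.2.1 m.2.2).1⟩
            left_inv := fun z => Subtype.ext ?_
            right_inv := fun m => Subtype.ext ?_
            continuous_toFun := ?_
            continuous_invFun := ?_ }, fun z => rfl⟩
  · simp only
    rw [(sub_half_chordLength_smul_mem hx₀ z.2).2, sub_add_cancel]
  · simp only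
    rw [(add_chordLength_neg_smul_mem hx₀ m.2.1 m.2.2).2]
    module
  · exact (continuous_subtype_val.sub
      (((continuousOn_chordLength_upperSphere hx₀).domRestrict.div_const 2).smul
        continuous_const)).subtype_mk _
  · exact (continuous_subtype_val.add (hτ.domRestrict.smul continuous_const)).subtype_mk _

/-- The map `φ(z) := z − (σ(z)/2)•x` is a homeomorphism of `S⁺` onto
the set `C` of midpoints of chords of the unit ball parallel to `x` meeting the
interior of the unit ball. -/
theorem upperSphere_homeo_chordMidpoints {X : Type*} [NormedAddCommGroup X]
    [NormedSpace ℝ X] [FiniteDimensional ℝ X] (x : X) (hx : ‖x‖ = 1) :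
    ∃ e : upperSphere x ≃ₜ {m : X | m ∈ chordMidpoints x ∧ ‖m‖ < 1},
      ∀ z : upperSphere x, (e z : X) = (z : X) - (chordLength x (z : X) / 2) • x :=
  upperSphere_homeo_chordMidpoints_general x hx
end

section
/- Let X be a real normed space and let x ∈ X with ‖x‖ = 1. Then the bounded-representation map Φ(z) := (1/‖z − x‖)•z, restricted to the set {z ∈ B(−x,x) : ‖z‖ < ‖z − x‖} of bisector points whose image lies in the open unit ball, is a homeomorphism onto the set C := {(u + v)/2 : u, v ∈ S, v − u ∈ ℝ_{>0}•x, ‖(u + v)/2‖ < 1} of midpoints of chords of the unit ball parallel to x that meet the interior of the unit ball. -/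
theorem continuous_of_forall_lt_of_forall_gt {T : Type*} [TopologicalSpace T]
    {f : T → ℝ → ℝ} {σ : T → ℝ} {c : ℝ} (hf : ∀ s, Continuous fun t => f t s)
    (hσ : ∀ t, 0 < σ t) (hlt : ∀ t s, 0 < s → s < σ t → f t s < c)
    (hgt : ∀ t s, σ t < s → c < f t s) : Continuous σ := by
  refine continuous_iff_continuousAt.2 fun t₀ =>
    tendsto_order.2 ⟨fun a ha => ?_, fun b hb => ?_⟩
  · obtain ⟨a', ha', ha'σ⟩ := exists_between (max_lt ha (hσ t₀))
    filter_upwards [(hf a').continuousAt.eventually_lt continuousAt_const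
      (hlt t₀ a' ((le_max_right _ _).trans_lt ha') ha'σ)] with t ht
    exact not_le.1 fun h => (hgt t a' (h.trans_lt ((le_max_left _ _).trans_lt ha'))).not_gt ht
  · obtain ⟨b', hσb', hb'⟩ := exists_between hb
    filter_upwards [continuousAt_const.eventually_lt (hf b').continuousAt (hgt t₀ b' hσb')]
      with t ht
    exact not_le.1 fun h => (hlt t b' ((hσ t₀).trans hσb') (hb'.trans_le h)).not_gt ht

section

variable {X : Type*} [NormedAddCommGroup X] [NormedSpace ℝ X]

theorem norm_add_smul_lt_one_of_lt {m x : X} (hm : ‖m‖ < 1) {r s : ℝ} (hr : 0 ≤ r)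
    (hrs : r < s) (hs : ‖m + s • x‖ ≤ 1) : ‖m + r • x‖ < 1 := by
  have hs0 : 0 < s := hr.trans_lt hrs
  have hmem := (convex_closedBall (0 : X) 1).add_smul_sub_mem_interior
    (x := m + s • x) (y := m) (by simpa using hs)
    (by simpa [interior_closedBall _ one_ne_zero] using hm)
    (t := 1 - r / s) ⟨by rw [sub_pos, div_lt_one hs0]; exact hrs, sub_le_self _ (by positivity)⟩
  have hcombo : m + s • x + (1 - r / s) • (m - (m + s • x)) = m + r • x := by
    match_scalars <;> field_simp <;> ring
  rwa [hcombo, interior_closedBall _ one_ne_zero, mem_ball_zero_iff] at hmem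

theorem one_lt_norm_add_smul_of_lt {m x : X} (hm : ‖m‖ < 1) {r s : ℝ} (hs : 0 < s)
    (h : ‖m + s • x‖ = 1) (hsr : s < r) : 1 < ‖m + r • x‖ :=
  not_le.1 fun hr => (norm_add_smul_lt_one_of_lt hm hs.le hsr hr).ne h

theorem eq_of_norm_add_smul_eq_one {m x : X} (hm : ‖m‖ < 1) {s₁ s₂ : ℝ} (h₁ : 0 < s₁)
    (h₂ : 0 < s₂) (e₁ : ‖m + s₁ • x‖ = 1) (e₂ : ‖m + s₂ • x‖ = 1) : s₁ = s₂ :=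
  le_antisymm (not_lt.1 fun h => (one_lt_norm_add_smul_of_lt hm h₂ e₂ h).ne' e₁)
    (not_lt.1 fun h => (one_lt_norm_add_smul_of_lt hm h₁ e₁ h).ne' e₂)

theorem norm_inv_smul_sub_eq_inv {m x : X} {s : ℝ} (hs : 0 < s) (h : ‖m - s • x‖ = 1) :
    ‖s⁻¹ • m - x‖ = s⁻¹ := by
  rw [← inv_smul_smul₀ hs.ne' x, ← smul_sub, norm_smul, h, Real.norm_of_nonneg (by positivity),
    mul_one]

theorem exists_norm_sub_smul_eq_one_of_mem_chordMidpoints {x m : X}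
    (hm : m ∈ chordMidpoints x) : ∃ s : ℝ, 0 < s ∧ ‖m - s • x‖ = 1 ∧ ‖m + s • x‖ = 1 := by
  obtain ⟨u, v, hu, hv, ⟨l, hl, hvu⟩, rfl⟩ := hm
  obtain rfl : v = u + l • x := by rw [← hvu]; abel
  refine ⟨l / 2, by positivity, ?_, ?_⟩
  · convert hu using 2; module
  · convert hv using 2; module

/-- Only for `‖m‖ < 1` is the chord through `m` unique: on the unit sphere, `m` may lie on a
segment of the sphere parallel to `x`. -/
noncomputable def chordHalfLength {x m : X} (hm : m ∈ chordMidpoints x) : ℝ :=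
  (exists_norm_sub_smul_eq_one_of_mem_chordMidpoints hm).choose

section

variable {x m : X} (hm : m ∈ chordMidpoints x)

theorem chordHalfLength_pos : 0 < chordHalfLength hm :=
  (exists_norm_sub_smul_eq_one_of_mem_chordMidpoints hm).choose_spec.1

theorem norm_sub_chordHalfLength_smul : ‖m - chordHalfLength hm • x‖ = 1 :=
  (exists_norm_sub_smul_eq_one_of_mem_chordMidpoints hm).choose_spec.2.1

theorem norm_add_chordHalfLength_smul : ‖m + chordHalfLength hm • x‖ = 1 :=
  (exists_norm_sub_smul_eq_one_of_mem_chordMidpoints hm).choose_spec.2.2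

theorem chordHalfLength_eq (hm1 : ‖m‖ < 1) {s : ℝ} (hs : 0 < s) (h : ‖m + s • x‖ = 1) :
    chordHalfLength hm = s :=
  eq_of_norm_add_smul_eq_one hm1 (chordHalfLength_pos hm) hs (norm_add_chordHalfLength_smul hm) h

end

theorem continuous_chordHalfLength (x : X) :
    Continuous fun m : {m : X | m ∈ chordMidpoints x ∧ ‖m‖ < 1} => chordHalfLength m.2.1 :=
  continuous_of_forall_lt_of_forall_gt (c := 1)
    (f := fun (m : {m : X | m ∈ chordMidpoints x ∧ ‖m‖ < 1}) r => ‖(m : X) + r • x‖)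
    (fun _ => (continuous_subtype_val.add continuous_const).norm)
    (fun m => chordHalfLength_pos m.2.1)
    (fun m _ hr hrs => norm_add_smul_lt_one_of_lt m.2.2 hr.le hrs
      (norm_add_chordHalfLength_smul m.2.1).le)
    (fun m _ hsr => one_lt_norm_add_smul_of_lt m.2.2 (chordHalfLength_pos m.2.1)
      (norm_add_chordHalfLength_smul m.2.1) hsr)

theorem norm_inv_norm_sub_smul_lt_one {x z : X} (h : ‖z‖ < ‖z - x‖) :
    ‖‖z - x‖⁻¹ • z‖ < 1 := by
  rw [norm_smul, norm_inv, norm_norm, inv_mul_lt_one₀ ((norm_nonneg z).trans_lt h)]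
  exact h

theorem inv_norm_sub_smul_mem_chordMidpoints {x z : X} (h : ‖z - x‖ = ‖z + x‖) (hz : z ≠ x) :
    ‖z - x‖⁻¹ • z ∈ chordMidpoints x := by
  have hzx : z - x ≠ 0 := sub_ne_zero.2 hz
  have hzx' : z + x ≠ 0 := norm_ne_zero_iff.1 (h ▸ norm_ne_zero_iff.2 hzx)
  refine ⟨‖z - x‖⁻¹ • (z - x), ‖z - x‖⁻¹ • (z + x), norm_smul_inv_norm hzx,
    h ▸ norm_smul_inv_norm hzx', ⟨2 * ‖z - x‖⁻¹, by positivity, by module⟩, by module⟩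

theorem chordHalfLength_inv_norm_sub_smul {x z : X} (h : ‖z - x‖ = ‖z + x‖)
    (hz : ‖z‖ < ‖z - x‖) (hm : ‖z - x‖⁻¹ • z ∈ chordMidpoints x) :
    chordHalfLength hm = ‖z - x‖⁻¹ := by
  have hzx : 0 < ‖z - x‖ := (norm_nonneg z).trans_lt hz
  refine chordHalfLength_eq hm (norm_inv_norm_sub_smul_lt_one hz) (inv_pos.2 hzx) ?_
  rw [← smul_add, h]
  exact norm_smul_inv_norm (norm_pos_iff.1 (h ▸ hzx))

theorem inv_smul_mem_bisector {x m : X} (hm : ‖m‖ < 1) {s : ℝ} (hs : 0 < s)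
    (h₁ : ‖m - s • x‖ = 1) (h₂ : ‖m + s • x‖ = 1) :
    ‖s⁻¹ • m - x‖ = ‖s⁻¹ • m + x‖ ∧ ‖s⁻¹ • m‖ < ‖s⁻¹ • m - x‖ := by
  have h₂' : ‖s⁻¹ • m + x‖ = s⁻¹ := by
    simpa using norm_inv_smul_sub_eq_inv (x := -x) hs (by simpa using h₂)
  rw [norm_inv_smul_sub_eq_inv hs h₁, h₂', norm_smul, Real.norm_of_nonneg (by positivity)]
  exact ⟨rfl, mul_lt_of_lt_one_right (by positivity) hm⟩

end

theorem Phi_homeo_onto_interior_midpoints_general {X : Type*} [NormedAddCommGroup X]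
    [NormedSpace ℝ X] (x : X) :
    ∃ e : {z : X | ‖z - x‖ = ‖z + x‖ ∧ ‖z‖ < ‖z - x‖} ≃ₜ
      {m : X | m ∈ chordMidpoints x ∧ ‖m‖ < 1},
      ∀ z : {z : X | ‖z - x‖ = ‖z + x‖ ∧ ‖z‖ < ‖z - x‖},
        (e z : X) = (‖(z : X) - x‖)⁻¹ • (z : X) := by
  have hpos (z : {z : X | ‖z - x‖ = ‖z + x‖ ∧ ‖z‖ < ‖z - x‖}) : 0 < ‖(z : X) - x‖ :=
    (norm_nonneg _).trans_lt z.2.2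
  refine ⟨{
    toFun z := ⟨‖(z : X) - x‖⁻¹ • (z : X),
      inv_norm_sub_smul_mem_chordMidpoints z.2.1 (sub_ne_zero.1 (norm_pos_iff.1 (hpos z))),
      norm_inv_norm_sub_smul_lt_one z.2.2⟩
    invFun m := ⟨(chordHalfLength m.2.1)⁻¹ • (m : X),
      inv_smul_mem_bisector m.2.2 (chordHalfLength_pos m.2.1)
        (norm_sub_chordHalfLength_smul m.2.1) (norm_add_chordHalfLength_smul m.2.1)⟩
    left_inv z := Subtype.ext <| by
      simp only [chordHalfLength_inv_norm_sub_smul z.2.1 z.2.2, inv_inv,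
        smul_inv_smul₀ (hpos z).ne']
    right_inv m := Subtype.ext <| by
      have hs := chordHalfLength_pos m.2.1
      simp only [norm_inv_smul_sub_eq_inv hs (norm_sub_chordHalfLength_smul m.2.1), inv_inv,
        smul_inv_smul₀ hs.ne']
    continuous_toFun := (((continuous_subtype_val.sub continuous_const).norm.inv₀
      fun z => (hpos z).ne').smul continuous_subtype_val).subtype_mk _
    continuous_invFun := (((continuous_chordHalfLength x).inv₀
      fun m => (chordHalfLength_pos m.2.1).ne').smul continuous_subtype_val).subtype_mk _ },
    fun _ => rfl⟩

/-- The bounded-representation map `Φ(z) := (1/‖z − x‖)•z`, restricted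
to the set of bisector points whose image lies in the open unit ball, is a
homeomorphism onto the set `C` of midpoints of chords of the unit ball parallel to
`x` meeting the interior of the unit ball. -/
theorem Phi_homeo_onto_interior_midpoints {X : Type*} [NormedAddCommGroup X]
    [NormedSpace ℝ X] (x : X) (hx : ‖x‖ = 1) :
    ∃ e : {z : X | ‖z - x‖ = ‖z + x‖ ∧ ‖z‖ < ‖z - x‖} ≃ₜ
      {m : X | m ∈ chordMidpoints x ∧ ‖m‖ < 1},
      ∀ z : {z : X | ‖z - x‖ = ‖z + x‖ ∧ ‖z‖ < ‖z - x‖},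
        (e z : X) = (‖(z : X) - x‖)⁻¹ • (z : X) :=
  Phi_homeo_onto_interior_midpoints_general x
end
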